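/- For every a ∈ ℝ^{n+1} with a(ζ_j) ≠ 0 for all j, the functional 𝕁_P is differentiable at a and its gradient satisfies (1/2) ∇𝕁_P(a) = T_n a − T_γ(a) b = [ T_n − T_n(a) ] a. -/

import Mathlib

/-!
On the unit circle `a(ζ⁻¹) = conj a(ζ)`, so the logarithmic term of `𝕁_P` is
`Σ_j P(ζ_j) log |a(ζ_j)|²`, whose derivative in the direction `v` is `2 Re(v(ζ_j)/a(ζ_j))`
weighted by the real number `P(ζ_j)`. Expanding `v(ζ) = Σ_i v_i ζ^{-i}` and
`b(ζ⁻¹) = Σ_k b_k ζ^k` identifies `(1/2N) Σ_j Re(P(ζ_j) v(ζ_j)/a(ζ_j))` with `⟨T_γ(a) b, v⟩`.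
The same expansion writes both `T_γ(a) b` and `T_n(a) a` as discrete means of
`ζ^{-i} b(ζ⁻¹) b(ζ)/a(ζ) = ζ^{-i} a(ζ⁻¹) P(ζ)/(a(ζ) a(ζ⁻¹))`, once the symmetry
`c̃_{-k} = c̃_k` (the weight `P/(a a*)` is real on the circle) puts `T_n(a)` in Toeplitz form
`c̃_{j-i}`.
-/

open Finset Complex Matrix

noncomputable section

/-- The point `ζ_j = exp(iπ j / N)` of the discrete unit circle `𝕋_{2N}`. -/
def zeta (N : ℕ) (j : ℤ) : ℂ := Complex.exp (Real.pi * Complex.I * j / N)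

/-- The index set `j = -N+1, …, N`. -/
def Idx (N : ℕ) : Finset ℤ := Finset.Icc (-(N : ℤ) + 1) (N : ℤ)

/-- `a(ζ) = Σ_{k=0}^n a_k ζ^{-k}`. -/
def evC {n : ℕ} (a : Fin (n + 1) → ℝ) (z : ℂ) : ℂ :=
  ∑ k : Fin (n + 1), (a k : ℂ) * z ^ (-(k.val : ℤ))

/-- The symmetric Toeplitz matrix `T_n` with `(i,j)` entry `c_{|i-j|}`. -/
def Toep {n : ℕ} (c : Fin (n + 1) → ℝ) : Matrix (Fin (n + 1)) (Fin (n + 1)) ℝ :=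
  fun i j => c ⟨max ((i : ℕ) - (j : ℕ)) ((j : ℕ) - (i : ℕ)),
    by have := i.isLt; have := j.isLt; omega⟩

/-- `P(ζ) = b(ζ) b(ζ^{-1})`. -/
def PPd {n : ℕ} (b : Fin (n + 1) → ℝ) (z : ℂ) : ℂ := evC b z * evC b z⁻¹

/-- `𝕁_P(a) = aᵀ T_n a − (1/2N) Σ_j P(ζ_j) log( a(ζ_j) a(ζ_j^{-1}) )`. -/
def Jd (N : ℕ) {n : ℕ} (c b a : Fin (n + 1) → ℝ) : ℝ :=
  dotProduct a ((Toep c).mulVec a) -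
    (∑ j ∈ Idx N, (PPd b (zeta N j)).re *
        Real.log ((evC a (zeta N j) * evC a (zeta N j)⁻¹).re)) / (2 * N)

/-- `γ_t(a) = (1/2N) Σ_j ζ_j^t b(ζ_j)/a(ζ_j)` (a real number). -/
def gam (N : ℕ) {n : ℕ} (b a : Fin (n + 1) → ℝ) (t : ℤ) : ℝ :=
  ((∑ j ∈ Idx N, zeta N j ^ t * evC b (zeta N j) / evC a (zeta N j)) / (2 * N)).re

/-- The matrix `T_γ(a)` with `(i,j)` entry `γ_{j−i}(a)`. -/
def Tgam (N : ℕ) {n : ℕ} (b a : Fin (n + 1) → ℝ) :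
    Matrix (Fin (n + 1)) (Fin (n + 1)) ℝ :=
  fun i j => gam N b a ((j.val : ℤ) - (i.val : ℤ))

/-- `c̃_k(a) = (1/2N) Σ_j ζ_j^k P(ζ_j)/( a(ζ_j) a(ζ_j^{-1}) )` (a real number). -/
def ctil (N : ℕ) {n : ℕ} (b a : Fin (n + 1) → ℝ) (k : ℤ) : ℝ :=
  ((∑ j ∈ Idx N, zeta N j ^ k * PPd b (zeta N j) /
      (evC a (zeta N j) * evC a (zeta N j)⁻¹)) / (2 * N)).re

/-- The symmetric Toeplitz matrix `T_n(a)` with `(i,j)` entry `c̃_{|i−j|}(a)`. -/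
def TnA (N : ℕ) {n : ℕ} (b a : Fin (n + 1) → ℝ) :
    Matrix (Fin (n + 1)) (Fin (n + 1)) ℝ :=
  fun i j => ctil N b a ((max ((i : ℕ) - (j : ℕ)) ((j : ℕ) - (i : ℕ)) : ℕ) : ℤ)

open ComplexConjugate

lemma norm_zeta (N : ℕ) (j : ℤ) : ‖zeta N j‖ = 1 := by
  rw [zeta, show (Real.pi : ℂ) * I * j / N = ((Real.pi * j / N : ℝ) : ℂ) * I by push_cast; ring]
  exact Complex.norm_exp_ofReal_mul_I _

lemma zeta_ne_zero (N : ℕ) (j : ℤ) : zeta N j ≠ 0 := Complex.exp_ne_zero _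

lemma evC_conj {n : ℕ} (a : Fin (n + 1) → ℝ) (z : ℂ) : evC a (conj z) = conj (evC a z) := by
  simp [evC]

lemma evC_inv_eq_conj {n : ℕ} (a : Fin (n + 1) → ℝ) {z : ℂ} (hz : ‖z‖ = 1) :
    evC a z⁻¹ = conj (evC a z) := by
  rw [Complex.inv_eq_conj hz, evC_conj]

lemma evC_mul_evC_inv {n : ℕ} (a : Fin (n + 1) → ℝ) {z : ℂ} (hz : ‖z‖ = 1) :
    evC a z * evC a z⁻¹ = ((‖evC a z‖ ^ 2 : ℝ) : ℂ) := by
  rw [evC_inv_eq_conj a hz, Complex.mul_conj, Complex.normSq_eq_norm_sq]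

lemma evC_inv {n : ℕ} (x : Fin (n + 1) → ℝ) (z : ℂ) :
    evC x z⁻¹ = ∑ k : Fin (n + 1), (x k : ℂ) * z ^ (k : ℤ) := by
  simp [evC, _root_.zpow_neg]

lemma sum_mul_zpow_sub {n : ℕ} (x : Fin (n + 1) → ℝ) {z : ℂ} (hz : z ≠ 0) (i : ℕ) :
    ∑ k : Fin (n + 1), (x k : ℂ) * z ^ ((k : ℤ) - i) = z ^ (-(i : ℤ)) * evC x z⁻¹ := by
  rw [evC_inv, Finset.mul_sum]
  refine Finset.sum_congr rfl fun k _ => ?_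
  rw [sub_eq_add_neg, zpow_add₀ hz]
  ring

def circleMean (N : ℕ) (g : ℂ → ℂ) : ℂ := (∑ j ∈ Idx N, g (zeta N j)) / (2 * N)

lemma circleMean_congr {N : ℕ} {f g : ℂ → ℂ} (h : ∀ j ∈ Idx N, f (zeta N j) = g (zeta N j)) :
    circleMean N f = circleMean N g := by
  rw [circleMean, circleMean, Finset.sum_congr rfl h]

lemma conj_circleMean (N : ℕ) (g : ℂ → ℂ) :
    conj (circleMean N g) = circleMean N (fun z => conj (g z)) := by
  simp [circleMean, map_ofNat]

lemma re_circleMean (N : ℕ) (g : ℂ → ℂ) :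
    (circleMean N g).re = (∑ j ∈ Idx N, (g (zeta N j)).re) / (2 * N) := by
  rw [circleMean, show (2 * N : ℂ) = ((2 * N : ℝ) : ℂ) by push_cast; rfl, Complex.div_ofReal_re,
    Complex.re_sum]

lemma sum_mul_re_circleMean {ι : Type*} (s : Finset ι) (N : ℕ) (x : ι → ℝ) (g : ι → ℂ → ℂ) :
    ∑ k ∈ s, x k * (circleMean N (g k)).re =
      (circleMean N (fun z => ∑ k ∈ s, x k * g k z)).re := by
  simp only [re_circleMean, Complex.re_sum, Complex.re_ofReal_mul, mul_div_assoc',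
    ← Finset.sum_div, Finset.mul_sum]
  rw [Finset.sum_comm]

lemma sum_re_circleMean_zpow_sub_mul {n : ℕ} (N : ℕ) (w : ℂ → ℂ) (x : Fin (n + 1) → ℝ) (i : ℕ) :
    ∑ k : Fin (n + 1), (circleMean N (fun z => z ^ ((k : ℤ) - i) * w z)).re * x k =
      (circleMean N (fun z => z ^ (-(i : ℤ)) * evC x z⁻¹ * w z)).re := by
  simp only [mul_comm _ (x _), sum_mul_re_circleMean]
  congr 1
  refine circleMean_congr fun j _ => ?_
  rw [← sum_mul_zpow_sub x (zeta_ne_zero N j), Finset.sum_mul]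
  exact Finset.sum_congr rfl fun k _ => by ring

lemma gam_eq_re_circleMean (N : ℕ) {n : ℕ} (b a : Fin (n + 1) → ℝ) (t : ℤ) :
    gam N b a t = (circleMean N (fun z => z ^ t * (evC b z / evC a z))).re := by
  simp only [gam, circleMean, mul_div_assoc]

lemma ctil_eq_re_circleMean (N : ℕ) {n : ℕ} (b a : Fin (n + 1) → ℝ) (t : ℤ) :
    ctil N b a t =
      (circleMean N (fun z => z ^ t * (PPd b z / (evC a z * evC a z⁻¹)))).re := by
  simp only [ctil, circleMean, mul_div_assoc]

lemma ctil_neg (N : ℕ) {n : ℕ} (b a : Fin (n + 1) → ℝ) (t : ℤ) :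
    ctil N b a (-t) = ctil N b a t := by
  rw [ctil_eq_re_circleMean, ctil_eq_re_circleMean, ← Complex.conj_re, conj_circleMean]
  congr 1
  refine circleMean_congr fun j _ => ?_
  have hz := norm_zeta N j
  simp only [map_mul, map_div₀, map_zpow₀, PPd, evC_mul_evC_inv b hz, evC_mul_evC_inv a hz,
    Complex.conj_ofReal, ← Complex.inv_eq_conj hz, _root_.inv_zpow', neg_neg]

lemma Tgam_mulVec_apply (N : ℕ) {n : ℕ} (b a x : Fin (n + 1) → ℝ) (i : Fin (n + 1)) :
    (Tgam N b a *ᵥ x) i =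
      (circleMean N (fun z => z ^ (-(i : ℤ)) * evC x z⁻¹ * (evC b z / evC a z))).re := by
  simp only [mulVec, dotProduct, Tgam, gam_eq_re_circleMean, sum_re_circleMean_zpow_sub_mul]

lemma TnA_mulVec_apply (N : ℕ) {n : ℕ} (b a x : Fin (n + 1) → ℝ) (i : Fin (n + 1)) :
    (TnA N b a *ᵥ x) i = (circleMean N (fun z =>
      z ^ (-(i : ℤ)) * evC x z⁻¹ * (PPd b z / (evC a z * evC a z⁻¹)))).re := by
  have hentry (k : Fin (n + 1)) : TnA N b a i k = ctil N b a ((k : ℤ) - i) := by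
    rcases le_total (i : ℕ) k with h | h
    · show ctil N b a _ = _
      congr 1; omega
    · rw [← ctil_neg]
      show ctil N b a _ = _
      congr 1; omega
  simp only [mulVec, dotProduct, hentry, ctil_eq_re_circleMean, sum_re_circleMean_zpow_sub_mul]

lemma Tgam_mulVec_eq_TnA_mulVec (N : ℕ) {n : ℕ} (b a : Fin (n + 1) → ℝ)
    (ha : ∀ j ∈ Idx N, evC a (zeta N j) ≠ 0) : Tgam N b a *ᵥ b = TnA N b a *ᵥ a := by
  ext i
  rw [Tgam_mulVec_apply, TnA_mulVec_apply]
  congr 1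
  refine circleMean_congr fun j hj => ?_
  have ha' : evC a (zeta N j)⁻¹ ≠ 0 := by
    rw [evC_inv_eq_conj a (norm_zeta N j)]; exact (map_ne_zero _).mpr (ha j hj)
  rw [PPd]
  field_simp [ha j hj, ha']

lemma Tgam_mulVec_dotProduct (N : ℕ) {n : ℕ} (b a v : Fin (n + 1) → ℝ) :
    (Tgam N b a *ᵥ b) ⬝ᵥ v = (circleMean N (fun z => PPd b z * evC v z / evC a z)).re := by
  simp only [dotProduct, Tgam_mulVec_apply, mul_comm _ (v _), sum_mul_re_circleMean]
  congr 2
  ext z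
  rw [show evC v z = ∑ k, (v k : ℂ) * z ^ (-(k : ℤ)) from rfl, PPd, Finset.mul_sum,
    Finset.sum_div]
  exact Finset.sum_congr rfl fun k _ => by ring

def dotProductCLM {ι : Type*} [Fintype ι] (g : ι → ℝ) : (ι → ℝ) →L[ℝ] ℝ :=
  ∑ i, g i • ContinuousLinearMap.proj i

@[simp]
lemma dotProductCLM_apply {ι : Type*} [Fintype ι] (g v : ι → ℝ) : dotProductCLM g v = g ⬝ᵥ v := by
  simp [dotProductCLM, dotProduct]

lemma hasFDerivAt_dotProduct_mulVec_self {ι : Type*} [Fintype ι] (M : Matrix ι ι ℝ)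
    (a : ι → ℝ) : HasFDerivAt (fun x => x ⬝ᵥ M *ᵥ x) (dotProductCLM (M *ᵥ a + Mᵀ *ᵥ a)) a := by
  have h := HasFDerivAt.fun_sum (u := Finset.univ) fun i _ =>
    (hasFDerivAt_apply i a).fun_mul (dotProductCLM (M i)).hasFDerivAt
  simp only [dotProductCLM_apply] at h
  refine h.congr_fderiv (ContinuousLinearMap.ext fun v => ?_)
  simp only [FunLike.coe_sum, Finset.sum_apply, _root_.add_apply,
    _root_.smul_apply, dotProductCLM_apply, ContinuousLinearMap.proj_apply,
    smul_eq_mul, Finset.sum_add_distrib, add_dotProduct, mulVec_transpose, ← dotProduct_mulVec]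
  rw [add_comm]
  rfl

def evCLM (n : ℕ) (z : ℂ) : (Fin (n + 1) → ℝ) →L[ℝ] ℂ :=
  ∑ k : Fin (n + 1), z ^ (-(k : ℤ)) • (Complex.ofRealCLM.comp (ContinuousLinearMap.proj k))

@[simp]
lemma evCLM_apply {n : ℕ} (z : ℂ) (x : Fin (n + 1) → ℝ) : evCLM n z x = evC x z := by
  simp [evCLM, evC, mul_comm]

lemma hasFDerivAt_log_sq_norm_evC {n : ℕ} (z : ℂ) (a : Fin (n + 1) → ℝ) (ha : evC a z ≠ 0) :
    HasFDerivAt (fun x => Real.log (‖evC x z‖ ^ 2))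
      (Complex.reCLM.comp ((2 / evC a z) • evCLM n z)) a := by
  have h := ((evCLM n z).hasFDerivAt (x := a)).norm_sq.log
    (by simpa using pow_ne_zero 2 (norm_ne_zero_iff.mpr ha))
  simp only [evCLM_apply] at h
  refine h.congr_fderiv (ContinuousLinearMap.ext fun v => ?_)
  simp only [_root_.smul_apply, ContinuousLinearMap.comp_apply, evCLM_apply,
    innerSL_apply_apply, Complex.inner, Complex.reCLM_apply, smul_eq_mul]
  rw [div_mul_eq_mul_div, Complex.div_re, ← Complex.normSq_eq_norm_sq]
  simp only [Complex.mul_re, Complex.mul_im, Complex.conj_re, Complex.conj_im]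
  norm_num
  ring

lemma Toep_transpose {n : ℕ} (c : Fin (n + 1) → ℝ) : (Toep c)ᵀ = Toep c := by
  ext i j
  simp only [transpose_apply, Toep, max_comm]

lemma Jd_eq (N : ℕ) {n : ℕ} (c b : Fin (n + 1) → ℝ) :
    Jd N c b = fun x => x ⬝ᵥ Toep c *ᵥ x -
      (2 * N : ℝ)⁻¹ * ∑ j ∈ Idx N, (PPd b (zeta N j)).re * Real.log (‖evC x (zeta N j)‖ ^ 2) := by
  funext x
  simp only [Jd, evC_mul_evC_inv x (norm_zeta N _), Complex.ofReal_re, inv_mul_eq_div]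

lemma hasFDerivAt_Jd (N : ℕ) {n : ℕ} (c b a : Fin (n + 1) → ℝ)
    (ha : ∀ j ∈ Idx N, evC a (zeta N j) ≠ 0) :
    HasFDerivAt (Jd N c b) (2 • dotProductCLM (Toep c *ᵥ a - Tgam N b a *ᵥ b)) a := by
  have hlog := HasFDerivAt.fun_sum fun j hj =>
    (hasFDerivAt_log_sq_norm_evC _ a (ha j hj)).const_mul (PPd b (zeta N j)).re
  rw [Jd_eq]
  refine ((hasFDerivAt_dotProduct_mulVec_self (Toep c) a).sub
    (hlog.const_mul (2 * N : ℝ)⁻¹)).congr_fderiv (ContinuousLinearMap.ext fun v => ?_)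
  have hP (j : ℤ) (w : ℂ) :
      (PPd b (zeta N j)).re * (2 / evC a (zeta N j) * w).re =
        2 * (PPd b (zeta N j) * w / evC a (zeta N j)).re := by
    rw [PPd, evC_mul_evC_inv b (norm_zeta N j), Complex.ofReal_re, ← Complex.re_ofReal_mul,
      show (2 : ℂ) = ((2 : ℝ) : ℂ) by norm_num, ← Complex.re_ofReal_mul]
    ring_nf
  simp only [Toep_transpose, _root_.sub_apply, dotProductCLM_apply, add_dotProduct,
    _root_.smul_apply, _root_.sum_apply, ContinuousLinearMap.comp_apply, evCLM_apply, smul_eq_mul,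
    Complex.reCLM_apply, sub_dotProduct, Tgam_mulVec_dotProduct, re_circleMean, nsmul_eq_mul,
    Nat.cast_ofNat, hP, ← Finset.mul_sum]
  ring

theorem stmt6_general (N n : ℕ)
    (c b : Fin (n + 1) → ℝ)
    (a : Fin (n + 1) → ℝ) (ha : ∀ j ∈ Idx N, evC a (zeta N j) ≠ 0) :
    DifferentiableAt ℝ (Jd N c b) a ∧
    (∀ v : Fin (n + 1) → ℝ, fderiv ℝ (Jd N c b) a v =
      ∑ i : Fin (n + 1),
        (2 * (((Toep c).mulVec a - (Tgam N b a).mulVec b) i)) * v i) ∧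
    (Toep c).mulVec a - (Tgam N b a).mulVec b = (Toep c - TnA N b a).mulVec a := by
  have hJ := hasFDerivAt_Jd N c b a ha
  refine ⟨hJ.differentiableAt, fun v => ?_, ?_⟩
  · rw [hJ.fderiv, _root_.smul_apply, dotProductCLM_apply, nsmul_eq_mul, dotProduct,
      Finset.mul_sum]
    simp only [Nat.cast_ofNat, mul_assoc]
  · rw [sub_mulVec, Tgam_mulVec_eq_TnA_mulVec N b a ha]

/-- `𝕁_P` is differentiable at every `a` with `a(ζ_j) ≠ 0` for all `j`,
and `(1/2)∇𝕁_P(a) = T_n a − T_γ(a) b = [T_n − T_n(a)] a`. -/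
theorem stmt6 (N n : ℕ) (hn : 1 ≤ n) (hNn : n < N)
    (c b : Fin (n + 1) → ℝ) (hb0 : b 0 = 1)
    (a : Fin (n + 1) → ℝ) (ha : ∀ j ∈ Idx N, evC a (zeta N j) ≠ 0) :
    DifferentiableAt ℝ (Jd N c b) a ∧
    (∀ v : Fin (n + 1) → ℝ, fderiv ℝ (Jd N c b) a v =
      ∑ i : Fin (n + 1),
        (2 * (((Toep c).mulVec a - (Tgam N b a).mulVec b) i)) * v i) ∧
    (Toep c).mulVec a - (Tgam N b a).mulVec b = (Toep c - TnA N b a).mulVec a :=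
  stmt6_general N n c b a ha

end
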